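/- For any unifiable atoms α and β (where β is the head of a rule with variables disjoint from α, in a language whose only function symbols are addition of integer constants to temporal variables), there exists a most general unifier θ = [X₁:=t₁,…,Xₙ:=tₙ] such that every variable occurring in t₁,…,tₙ also occurs in α. -/

import Mathlib

/-- Terms of Temporal Datalog: object constants, object variables, time points,
and time expressions `T + k` for a time variable `T` and integer `k`. -/
inductive Tm where
  | const : ℕ → Tm
  | var : ℕ → Tm
  | timeConst : ℤ → Tm
  | timeVar : ℕ → ℤ → Tm
deriving DecidableEq

/-- Substitutions: (finitely supported) functions from variables to terms. -/
abbrev Subst : Type := ℕ → Tm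

/-- The identity substitution, given a sort assignment (`true` = temporal). -/
def idTm (sortOf : ℕ → Bool) (v : ℕ) : Tm :=
  if sortOf v then Tm.timeVar v 0 else Tm.var v

/-- Adding an integer constant to a time term (evaluating additions). -/
def Tm.shift : Tm → ℤ → Tm
  | .timeConst n, k => .timeConst (n + k)
  | .timeVar v j, k => .timeVar v (j + k)
  | t, _ => t

/-- Applying a substitution to a term, evaluating temporal additions. -/
def Tm.applySubst (σ : Subst) : Tm → Tm
  | .const c => .const c
  | .var v => σ v
  | .timeConst n => .timeConst n
  | .timeVar v k => (σ v).shift k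

/-- Composition of substitutions (simultaneous application; deletion of trivial
and shadowed bindings is extensionally invisible for functions). -/
def Subst.comp (θ σ : Subst) : Subst := fun v => (θ v).applySubst σ

/-- Variables occurring in a term. -/
def Tm.vars : Tm → Set ℕ
  | .var v => {v}
  | .timeVar v _ => {v}
  | _ => ∅

def Tm.isGround (t : Tm) : Prop := t.vars = ∅

/-- Atoms `P(t₁,…,tₙ)`. -/
structure Atom where
  pred : ℕ
  args : List Tm
deriving DecidableEq

def Atom.applySubst (σ : Subst) (a : Atom) : Atom := ⟨a.pred, a.args.map (Tm.applySubst σ)⟩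

def Atom.vars (a : Atom) : Set ℕ := {v | ∃ t ∈ a.args, v ∈ t.vars}

def Atom.isGround (a : Atom) : Prop := ∀ t ∈ a.args, t.isGround

/-- `θ` unifies atoms `a` and `b`. -/
def IsUnifier (θ : Subst) (a b : Atom) : Prop := a.applySubst θ = b.applySubst θ

/-- `θ` is a most general unifier of `a` and `b`: a unifier through which every
unifier factors. -/
def IsMgu (θ : Subst) (a b : Atom) : Prop :=
  IsUnifier θ a b ∧ ∀ σ, IsUnifier σ a b → ∃ γ, σ = θ.comp γ

/-!
Call two variables `v`, `w` linked with offset `d` if every unifier `σ` satisfies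
`σ w = σ v + d`. Each variable of the problem is either constant (and ground) on all
unifiers, or linked to a variable of `α`: a variable of `β` is linked to the variable of
the `α`-term it is matched with. The mgu `θ` sends a constant variable to its ground value
and any other variable `v` to `r + d`, where `r` is the least variable of `α` linked to `v`
and `d` the offset; if every unifier makes `r` absorb shifts (an object term), it sends
`v` to `r` itself. Linked variables then receive linked images, which makes `θ` a unifier,
and every unifier `σ` satisfies `σ = θ σ`.
-/

namespace Tm

theorem shift_zero (t : Tm) : t.shift 0 = t := by
  cases t <;> simp [shift]

theorem shift_shift (t : Tm) (j k : ℤ) : (t.shift j).shift k = t.shift (j + k) := by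
  cases t <;> simp [shift, add_assoc]

theorem shift_eq_iff {t u : Tm} {k : ℤ} : t.shift k = u ↔ t = u.shift (-k) := by
  constructor <;> rintro rfl <;> simp [shift_shift, shift_zero]

theorem eq_of_shift_eq_shift {t : Tm} {i j k : ℤ} (ht : t.shift k ≠ t)
    (h : t.shift i = t.shift j) : i = j := by
  cases t <;> simp_all [shift]

theorem isGround_shift {t : Tm} (ht : t.isGround) (k : ℤ) : (t.shift k).isGround := by
  cases t <;> simp_all [shift, isGround, vars]

theorem applySubst_of_isGround {t : Tm} (ht : t.isGround) (σ : Subst) : t.applySubst σ = t := by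
  cases t <;> simp_all [applySubst, isGround, vars]

theorem isGround_or_exists_applySubst_eq (t : Tm) :
    t.isGround ∨ ∃ v ∈ t.vars, ∃ k : ℤ, ∀ σ : Subst, t.applySubst σ = (σ v).shift k := by
  cases t with
  | const c => exact Or.inl rfl
  | timeConst n => exact Or.inl rfl
  | var v => exact Or.inr ⟨v, rfl, 0, fun σ => (shift_zero _).symm⟩
  | timeVar v k => exact Or.inr ⟨v, rfl, k, fun σ => rfl⟩

instance : Inhabited Tm := ⟨.const 0⟩

end Tm

theorem applySubst_idTm (sortOf : ℕ → Bool) (σ : Subst) (v : ℕ) :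
    (idTm sortOf v).applySubst σ = σ v := by
  unfold idTm
  split <;> simp [Tm.applySubst, Tm.shift_zero]

theorem isUnifier_iff {σ : Subst} {a b : Atom} :
    IsUnifier σ a b ↔ a.pred = b.pred ∧ a.args.length = b.args.length ∧
      ∀ s t, (s, t) ∈ a.args.zip b.args → s.applySubst σ = t.applySubst σ := by
  rw [IsUnifier, Atom.applySubst, Atom.applySubst, Atom.mk.injEq, ← List.forall₂_eq_eq_eq,
    List.forall₂_map_left_iff, List.forall₂_map_right_iff, List.forall₂_iff_zip]

section NormalMgu

variable (U : Set Subst)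

def OffsetOn (v w : ℕ) (d : ℤ) : Prop := ∀ σ ∈ U, σ w = (σ v).shift d

def GroundOn (v : ℕ) : Prop := ∃ g : Tm, g.isGround ∧ ∀ σ ∈ U, σ v = g

def InertOn (v : ℕ) : Prop := ∀ σ ∈ U, ∀ k, (σ v).shift k = σ v

def rootsOn (A : Set ℕ) (v : ℕ) : Set ℕ := {r | r ∈ A ∧ ∃ d, OffsetOn U r v d}

noncomputable def rootOn (A : Set ℕ) (v : ℕ) : ℕ := sInf (rootsOn U A v)

open Classical in
noncomputable def normalMgu (sortOf : ℕ → Bool) (A : Set ℕ) : Subst := fun v =>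
  if GroundOn U v then Classical.epsilon fun g => g.isGround ∧ ∀ σ ∈ U, σ v = g
  else if (rootsOn U A v).Nonempty then
    if InertOn U (rootOn U A v) then .var (rootOn U A v)
    else .timeVar (rootOn U A v) (Classical.epsilon (OffsetOn U (rootOn U A v) v))
  else idTm sortOf v

variable {U} {A : Set ℕ} {sortOf : ℕ → Bool}

theorem OffsetOn.refl (v : ℕ) : OffsetOn U v v 0 := fun σ _ => (σ v).shift_zero.symm

theorem OffsetOn.trans {u v w : ℕ} {d e : ℤ} (h₁ : OffsetOn U u v d) (h₂ : OffsetOn U v w e) :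
    OffsetOn U u w (d + e) := fun σ hσ => by
  rw [h₂ σ hσ, h₁ σ hσ, Tm.shift_shift]

theorem OffsetOn.symm {v w : ℕ} {d : ℤ} (h : OffsetOn U v w d) : OffsetOn U w v (-d) :=
  fun σ hσ => Tm.shift_eq_iff.1 (h σ hσ).symm

theorem GroundOn.of_offsetOn {v w : ℕ} {d : ℤ} (hv : GroundOn U v) (h : OffsetOn U v w d) :
    GroundOn U w := by
  obtain ⟨g, hg, hgv⟩ := hv
  exact ⟨g.shift d, Tm.isGround_shift hg d, fun σ hσ => by rw [h σ hσ, hgv σ hσ]⟩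

theorem rootsOn_subset_of_offsetOn {v w : ℕ} {d : ℤ} (h : OffsetOn U v w d) :
    rootsOn U A v ⊆ rootsOn U A w :=
  fun _ ⟨hr, e, hrv⟩ => ⟨hr, e + d, hrv.trans h⟩

theorem rootOn_eq_of_offsetOn {v w : ℕ} {d : ℤ} (h : OffsetOn U v w d) :
    rootOn U A w = rootOn U A v := by
  rw [rootOn, rootOn, (rootsOn_subset_of_offsetOn h.symm).antisymm (rootsOn_subset_of_offsetOn h)]

theorem rootOn_mem {v : ℕ} (h : (rootsOn U A v).Nonempty) : rootOn U A v ∈ rootsOn U A v :=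
  Nat.sInf_mem h

theorem offsetOn_rootOn {v : ℕ} (h : (rootsOn U A v).Nonempty) :
    OffsetOn U (rootOn U A v) v (Classical.epsilon (OffsetOn U (rootOn U A v) v)) :=
  Classical.epsilon_spec (rootOn_mem h).2

theorem normalMgu_of_groundOn {σ₀ : Subst} (hσ₀ : σ₀ ∈ U) {v : ℕ} (hv : GroundOn U v) :
    normalMgu U sortOf A v = σ₀ v := by
  rw [normalMgu, if_pos hv]
  exact ((Classical.epsilon_spec hv).2 σ₀ hσ₀).symm

theorem applySubst_normalMgu {σ : Subst} (hσ : σ ∈ U) (v : ℕ) :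
    (normalMgu U sortOf A v).applySubst σ = σ v := by
  unfold normalMgu
  split_ifs with hg hr hinert
  · obtain ⟨hground, hσv⟩ := Classical.epsilon_spec hg
    rw [Tm.applySubst_of_isGround hground, hσv σ hσ]
  · exact (hinert σ hσ _).symm.trans (offsetOn_rootOn hr σ hσ).symm
  · exact (offsetOn_rootOn hr σ hσ).symm
  · exact applySubst_idTm sortOf σ v

theorem normalMgu_comp {σ : Subst} (hσ : σ ∈ U) : (normalMgu U sortOf A).comp σ = σ :=
  funext (applySubst_normalMgu hσ)

theorem vars_normalMgu_subset (v : ℕ) (h : normalMgu U sortOf A v ≠ idTm sortOf v) :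
    (normalMgu U sortOf A v).vars ⊆ A := by
  unfold normalMgu at h ⊢
  split_ifs at h ⊢ with hg hr
  · rw [(Classical.epsilon_spec hg).1]
    exact Set.empty_subset A
  · simpa [Tm.vars] using (rootOn_mem hr).1
  · simpa [Tm.vars] using (rootOn_mem hr).1
  · exact absurd rfl h

theorem normalMgu_of_offsetOn {σ₀ : Subst} (hσ₀ : σ₀ ∈ U) {v w : ℕ} {d : ℤ} (hv : v ∈ A)
    (h : OffsetOn U v w d) :
    normalMgu U sortOf A w = (normalMgu U sortOf A v).shift d := by
  by_cases hg : GroundOn U v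
  · rw [normalMgu_of_groundOn hσ₀ hg, normalMgu_of_groundOn hσ₀ (hg.of_offsetOn h), h σ₀ hσ₀]
  have hgw : ¬ GroundOn U w := fun hw => hg (hw.of_offsetOn h.symm)
  have hrv : (rootsOn U A v).Nonempty := ⟨v, hv, 0, OffsetOn.refl v⟩
  have hrw : (rootsOn U A w).Nonempty := hrv.mono (rootsOn_subset_of_offsetOn h)
  have hroot := rootOn_eq_of_offsetOn (A := A) h
  have hoffset := offsetOn_rootOn hrw
  simp only [normalMgu, if_neg hg, if_neg hgw, if_pos hrv, if_pos hrw]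
  rw [hroot] at hoffset ⊢
  split_ifs with hinert
  · rfl
  · -- a unifier sending the root to a time term pins the offsets down
    obtain ⟨σ, hσ, k, hk⟩ : ∃ σ ∈ U, ∃ k, (σ (rootOn U A v)).shift k ≠ σ (rootOn U A v) := by
      simpa [InertOn] using hinert
    have hσw := ((offsetOn_rootOn hrv).trans h σ hσ).symm.trans (hoffset σ hσ)
    simp [Tm.shift, Tm.eq_of_shift_eq_shift hk hσw]

theorem applySubst_normalMgu_of_forall_eq {σ₀ : Subst} (hσ₀ : σ₀ ∈ U) {t g : Tm}
    (hg : g.isGround) (ht : ∀ σ ∈ U, t.applySubst σ = g) :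
    t.applySubst (normalMgu U sortOf A) = g := by
  rcases t.isGround_or_exists_applySubst_eq with ht₀ | ⟨v, -, k, hk⟩
  · rw [Tm.applySubst_of_isGround ht₀, ← ht σ₀ hσ₀, Tm.applySubst_of_isGround ht₀]
  have hv : GroundOn U v := ⟨g.shift (-k), Tm.isGround_shift hg _,
    fun σ hσ => Tm.shift_eq_iff.1 ((hk σ).symm.trans (ht σ hσ))⟩
  rw [hk, normalMgu_of_groundOn hσ₀ hv, ← hk, ht σ₀ hσ₀]

theorem applySubst_normalMgu_eq {σ₀ : Subst} (hσ₀ : σ₀ ∈ U) {s t : Tm} (hs : s.vars ⊆ A)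
    (hst : ∀ σ ∈ U, s.applySubst σ = t.applySubst σ) :
    s.applySubst (normalMgu U sortOf A) = t.applySubst (normalMgu U sortOf A) := by
  rcases s.isGround_or_exists_applySubst_eq with hs₀ | ⟨v, hv, k, hk⟩
  · rw [Tm.applySubst_of_isGround hs₀, applySubst_normalMgu_of_forall_eq hσ₀ hs₀
      fun σ hσ => by rw [← hst σ hσ, Tm.applySubst_of_isGround hs₀]]
  rcases t.isGround_or_exists_applySubst_eq with ht₀ | ⟨w, -, m, hm⟩
  · rw [Tm.applySubst_of_isGround ht₀, applySubst_normalMgu_of_forall_eq hσ₀ ht₀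
      fun σ hσ => by rw [hst σ hσ, Tm.applySubst_of_isGround ht₀]]
  have hvw : OffsetOn U v w (k - m) := fun σ hσ => by
    rw [Tm.shift_eq_iff.1 ((hm σ).symm.trans ((hst σ hσ).symm.trans (hk σ))), Tm.shift_shift,
      sub_eq_add_neg]
  rw [hk, hm, normalMgu_of_offsetOn hσ₀ (hs hv) hvw, Tm.shift_shift, sub_add_cancel]

end NormalMgu

theorem stmt_4_general (sortOf : ℕ → Bool) (α β : Atom)
    (hunif : ∃ θ : Subst, IsUnifier θ α β) :
    ∃ θ : Subst, IsMgu θ α β ∧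
      ∀ v : ℕ, θ v ≠ idTm sortOf v → (θ v).vars ⊆ α.vars := by
  obtain ⟨σ₀, hσ₀⟩ := hunif
  set U : Set Subst := {σ | IsUnifier σ α β}
  obtain ⟨hpred, hlen, -⟩ := isUnifier_iff.1 hσ₀
  refine ⟨normalMgu U sortOf α.vars, ⟨?_, fun σ hσ => ⟨σ, (normalMgu_comp hσ).symm⟩⟩,
    vars_normalMgu_subset⟩
  refine isUnifier_iff.2 ⟨hpred, hlen, fun s t hst => ?_⟩
  exact applySubst_normalMgu_eq (show σ₀ ∈ U from hσ₀)
    (fun v hv => ⟨s, (List.of_mem_zip hst).1, hv⟩)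
    fun σ hσ => (isUnifier_iff.1 hσ).2.2 s t hst

/-- Lemma 1 (mgu normalization): for unifiable atoms `α`, `β` with disjoint
variables, there is an mgu `θ` all of whose binding terms only use variables
occurring in `α`. -/
theorem stmt_4 (sortOf : ℕ → Bool) (α β : Atom)
    (hdisj : ∀ v, v ∈ α.vars → v ∉ β.vars)
    (hunif : ∃ θ : Subst, IsUnifier θ α β) :
    ∃ θ : Subst, IsMgu θ α β ∧
      ∀ v : ℕ, θ v ≠ idTm sortOf v → (θ v).vars ⊆ α.vars :=
  stmt_4_general sortOf α β hunif
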